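/- arXiv:0809.0733 — 5 statements merged into one kernel-verified Lean document; each statement's English description precedes it below -/
import Mathlib

section
/- Let C be a self-dual [24,12,10] code over F5 and let A5(C) = { (1/√5)·c : c ∈ ℤ^24, (c mod 5) ∈ C } ⊆ ℝ^24. Then every nonzero vector x ∈ A5(C) satisfies ⟨x,x⟩ ≥ 2; that is, A5(C) has minimum norm at least 2. -/
/-!
Write `x = c / √5` with `c ∈ ℤ²⁴`, so that `⟨x, x⟩ = (∑ cᵢ²) / 5`. If `c mod 5` is a nonzero
codeword, `c` has at least `10` nonzero entries, each contributing at least `1`. Otherwise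
every entry of `c` is divisible by `5`, and a nonzero one contributes at least `25`.
-/

open Finset

section ConstructionA

variable {ι : Type*} [Fintype ι]

theorem hammingNorm_le_sum_mul_self (c : ι → ℤ) : (hammingNorm c : ℤ) ≤ ∑ i, c i * c i := by
  calc (hammingNorm c : ℤ) = ∑ i ∈ univ.filter (c · ≠ 0), 1 := by simp [hammingNorm]
    _ ≤ ∑ i ∈ univ.filter (c · ≠ 0), c i * c i :=
        sum_le_sum fun i hi => by
          nlinarith [Int.one_le_abs (mem_filter.1 hi).2, abs_mul_abs_self (c i)]
    _ ≤ ∑ i, c i * c i :=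
        sum_le_sum_of_subset_of_nonneg (filter_subset _ _) fun i _ _ => mul_self_nonneg _

theorem mul_self_le_sum_mul_self_of_forall_dvd {n : ℤ} {c : ι → ℤ} (hc : c ≠ 0)
    (hdvd : ∀ i, n ∣ c i) : n * n ≤ ∑ i, c i * c i := by
  obtain ⟨j, hj⟩ := Function.ne_iff.1 hc
  obtain ⟨k, hk⟩ := hdvd j
  have hk0 : k ≠ 0 := by rintro rfl; simp_all
  have hk1 : 1 ≤ k * k := by nlinarith [Int.one_le_abs hk0, abs_mul_abs_self k]
  calc n * n ≤ c j * c j := by rw [hk]; nlinarith [mul_self_nonneg n]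
    _ ≤ ∑ i, c i * c i := single_le_sum (fun i _ => mul_self_nonneg (c i)) (mem_univ j)

theorem min_le_sum_mul_self_of_reduction_mem {n d : ℕ} (C : Set (ι → ZMod n))
    (hlow : ∀ c ∈ C, c ≠ 0 → d ≤ hammingNorm c) {c : ι → ℤ} (hc : c ≠ 0)
    (hcC : (fun i => (c i : ZMod n)) ∈ C) : min (d : ℤ) (n * n) ≤ ∑ i, c i * c i := by
  by_cases hred : (fun i => (c i : ZMod n)) = 0
  · refine min_le_of_right_le (mul_self_le_sum_mul_self_of_forall_dvd hc fun i => ?_)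
    exact (ZMod.intCast_zmod_eq_zero_iff_dvd _ _).1 (congrFun hred i)
  · refine min_le_of_left_le ((Nat.cast_le.2 (hlow _ hcC hred)).trans ?_)
    calc (hammingNorm (fun i => (c i : ZMod n)) : ℤ) ≤ hammingNorm c := by
          exact_mod_cast hammingNorm_comp_le_hammingNorm (fun _ (a : ℤ) => (a : ZMod n))
            fun _ => Int.cast_zero
      _ ≤ ∑ i, c i * c i := hammingNorm_le_sum_mul_self c

theorem sum_div_sqrt_mul_self (c : ι → ℝ) {a : ℝ} (ha : 0 ≤ a) :
    ∑ i, c i / √a * (c i / √a) = (∑ i, c i * c i) / a := by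
  rw [sum_div]
  exact sum_congr rfl fun i _ => by rw [div_mul_div_comm, Real.mul_self_sqrt ha]

end ConstructionA

theorem constructionA_min_norm_ge_two_general
    (C : Submodule (ZMod 5) (Fin 24 → ZMod 5))
    (hlow : ∀ c ∈ C, c ≠ 0 → 10 ≤ hammingNorm c)
    (L : Set (Fin 24 → ℝ))
    (hL : L = {x | ∃ c : Fin 24 → ℤ,
        (fun i => (c i : ZMod 5)) ∈ C ∧ x = fun i => (c i : ℝ) / Real.sqrt 5})
    (x : Fin 24 → ℝ) (hx : x ∈ L) (hx0 : x ≠ 0) :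
    2 ≤ ∑ i, x i * x i := by
  subst hL
  obtain ⟨c, hcC, rfl⟩ := hx
  have hc : c ≠ 0 := by rintro rfl; exact hx0 (funext fun i => by simp)
  have hnorm : (10 : ℤ) ≤ ∑ i, c i * c i := by
    simpa using min_le_sum_mul_self_of_reduction_mem (C : Set (Fin 24 → ZMod 5)) hlow hc hcC
  have hnormR : (10 : ℝ) ≤ ∑ i, (c i : ℝ) * c i := by exact_mod_cast hnorm
  rw [sum_div_sqrt_mul_self (fun i => (c i : ℝ)) (by norm_num)]
  linarith

/-- If `C` is a self-dual `[24,12,10]` code over `𝔽₅`, then every nonzero vector of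
the Construction A lattice `A₅(C) = { (1/√5)·c : c ∈ ℤ²⁴, (c mod 5) ∈ C }` has
norm at least `2`. -/
theorem constructionA_min_norm_ge_two
    (C : Submodule (ZMod 5) (Fin 24 → ZMod 5))
    (hdim : Module.finrank (ZMod 5) C = 12)
    (hsd : ∀ x : Fin 24 → ZMod 5, x ∈ C ↔ ∀ c ∈ C, ∑ i, x i * c i = 0)
    (hlow : ∀ c ∈ C, c ≠ 0 → 10 ≤ hammingNorm c)
    (hex : ∃ c ∈ C, c ≠ 0 ∧ hammingNorm c = 10)
    (L : Set (Fin 24 → ℝ))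
    (hL : L = {x | ∃ c : Fin 24 → ℤ,
        (fun i => (c i : ZMod 5)) ∈ C ∧ x = fun i => (c i : ℝ) / Real.sqrt 5})
    (x : Fin 24 → ℝ) (hx : x ∈ L) (hx0 : x ≠ 0) :
    2 ≤ ∑ i, x i * x i :=
  constructionA_min_norm_ge_two_general C hlow L hL x hx hx0
end

section
/- Let C be a self-dual [24,12,10] code over F5 and let A5(C) = { (1/√5)·c : c ∈ ℤ^24, (c mod 5) ∈ C } ⊆ ℝ^24. Then the map c ↦ (1/√5)·c is a bijection from the set of vectors c ∈ ℤ^24 with all entries in {-1,0,1}, exactly 10 nonzero entries, and (c mod 5) ∈ C, onto the set of vectors of A5(C) of norm 2. In particular, the kissing number of A5(C) (the number of vectors of minimum norm 2) equals the number of codewords of C all of whose coordinates lie in {0, 1, 4} ⊆ F5 and which have Hamming weight 10. -/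
/-!
Write a vector of `A₅(C)` as `c / √5` with `c ∈ ℤ²⁴`, so that norm 2 means `∑ cᵢ² = 10`. Then
`|cᵢ| < 5` for every `i`, so `c mod 5` is a nonzero codeword with the same support as `c`; the
minimum distance gives at least 10 nonzero entries, while `cᵢ² ≥ 1` on the support leaves room
for at most 10, with equality only if all of them are `±1`. Reduction mod 5 identifies these
`c` with the weight-10 codewords with entries in `{0, 1, 4}`, the inverse being the balanced lift
`ZMod.valMinAbs`.
-/

open Finset

lemma Int.ite_ne_zero_le_sq (n : ℤ) : (if n ≠ 0 then 1 else 0) ≤ n ^ 2 := by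
  split_ifs with h
  · rcases h.lt_or_gt with h | h <;> nlinarith
  · positivity

lemma Int.sq_eq_ite_ne_zero_iff {n : ℤ} :
    n ^ 2 = (if n ≠ 0 then 1 else 0) ↔ n = -1 ∨ n = 0 ∨ n = 1 := by
  by_cases h : n = 0
  · simp [h]
  · simp [h, or_comm]

lemma ZMod.intCast_eq_intCast_iff_of_abs_sub_lt {p : ℕ} {a b : ℤ} (h : |b - a| < p) :
    (a : ZMod p) = b ↔ a = b := by
  rw [ZMod.intCast_eq_intCast_iff_dvd_sub]
  exact ⟨fun hdvd => (sub_eq_zero.mp (Int.eq_zero_of_abs_lt_dvd hdvd h)).symm,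
    fun hab => by simp [hab]⟩

lemma Int.intCast_zmod_five_mem_of_ternary {n : ℤ} (h : n = -1 ∨ n = 0 ∨ n = 1) :
    (n : ZMod 5) = 0 ∨ (n : ZMod 5) = 1 ∨ (n : ZMod 5) = 4 := by
  rcases h with rfl | rfl | rfl <;> decide

lemma ZMod.valMinAbs_ternary_of_mem {a : ZMod 5} (h : a = 0 ∨ a = 1 ∨ a = 4) :
    a.valMinAbs = -1 ∨ a.valMinAbs = 0 ∨ a.valMinAbs = 1 := by
  rcases h with rfl | rfl | rfl <;> decide

lemma intCast_div_injective {ι : Type*} {r : ℝ} (hr : r ≠ 0) :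
    Function.Injective (fun (c : ι → ℤ) i => (c i : ℝ) / r) := fun _ _ h =>
  funext fun i => Int.cast_injective ((div_left_inj' hr).mp (congrFun h i))

section IntVector

variable {ι : Type*} [Fintype ι]

lemma card_support_le_sum_sq (c : ι → ℤ) : (#{i | c i ≠ 0} : ℤ) ≤ ∑ i, c i ^ 2 := by
  rw [natCast_card_filter]
  exact sum_le_sum fun i _ => Int.ite_ne_zero_le_sq (c i)

lemma sum_sq_eq_card_support_iff (c : ι → ℤ) :
    ∑ i, c i ^ 2 = #{i | c i ≠ 0} ↔ ∀ i, c i = -1 ∨ c i = 0 ∨ c i = 1 := by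
  rw [natCast_card_filter, eq_comm,
    sum_eq_sum_iff_of_le fun i _ => Int.ite_ne_zero_le_sq (c i)]
  simp only [mem_univ, true_implies, eq_comm (a := ite _ _ _), Int.sq_eq_ite_ne_zero_iff]

lemma hammingNorm_intCast_of_abs_lt {p : ℕ} {c : ι → ℤ} (h : ∀ i, |c i| < p) :
    hammingNorm (fun i => (c i : ZMod p)) = #{i | c i ≠ 0} := by
  have hzero (i : ι) : (c i : ZMod p) = 0 ↔ c i = 0 := by
    simpa using ZMod.intCast_eq_intCast_iff_of_abs_sub_lt (b := 0) (by simpa using h i)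
  simp only [hammingNorm, ne_eq, hzero]

theorem ternary_of_sum_sq_eq_of_le_hammingNorm {p d : ℕ} {C : Set (ι → ZMod p)}
    (hmin : ∀ w ∈ C, w ≠ 0 → d ≤ hammingNorm w) (hd : 0 < d) (hdp : d < p ^ 2)
    {c : ι → ℤ} (hc : (fun i => (c i : ZMod p)) ∈ C) (hsum : ∑ i, c i ^ 2 = d) :
    (∀ i, c i = -1 ∨ c i = 0 ∨ c i = 1) ∧ #{i | c i ≠ 0} = d := by
  have hsmall (i : ι) : |c i| < p := by
    refine abs_lt_of_sq_lt_sq ?_ (by positivity)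
    calc c i ^ 2 ≤ ∑ j, c j ^ 2 := single_le_sum (fun j _ => sq_nonneg (c j)) (mem_univ i)
      _ < (p : ℤ) ^ 2 := by rw [hsum]; exact_mod_cast hdp
  have hweight := hammingNorm_intCast_of_abs_lt hsmall
  have hne : (fun i => (c i : ZMod p)) ≠ 0 := by
    intro h0
    have hcard : #{i | c i ≠ 0} = 0 := by rw [← hweight, h0, hammingNorm_zero]
    simp only [card_eq_zero, filter_eq_empty_iff, mem_univ, true_implies, not_not] at hcard
    simp [hcard] at hsum
    omega
  have hcard : #{i | c i ≠ 0} = d := by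
    have hlower : d ≤ #{i | c i ≠ 0} := hweight ▸ hmin _ hc hne
    have hupper : (#{i | c i ≠ 0} : ℤ) ≤ d := hsum ▸ card_support_le_sum_sq c
    omega
  exact ⟨(sum_sq_eq_card_support_iff c).mp (by rw [hsum, hcard]), hcard⟩

theorem bijOn_intCast_zmod_five (C : Set (ι → ZMod 5)) (d : ℕ) :
    Set.BijOn (fun (c : ι → ℤ) i => (c i : ZMod 5))
      {c | (∀ i, c i = -1 ∨ c i = 0 ∨ c i = 1) ∧ #{i | c i ≠ 0} = d ∧
        (fun i => (c i : ZMod 5)) ∈ C}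
      {w | w ∈ C ∧ (∀ i, w i = 0 ∨ w i = 1 ∨ w i = 4) ∧ hammingNorm w = d} := by
  have hsmall {c : ι → ℤ} (h : ∀ i, c i = -1 ∨ c i = 0 ∨ c i = 1) (i : ι) :
      |c i| < (5 : ℕ) := by
    rcases h i with h | h | h <;> norm_num [h]
  refine ⟨?_, ?_, ?_⟩
  · rintro c ⟨hc, hcard, hC⟩
    exact ⟨hC, fun i => Int.intCast_zmod_five_mem_of_ternary (hc i),
      (hammingNorm_intCast_of_abs_lt (hsmall hc)).trans hcard⟩
  · rintro a ⟨ha, -, -⟩ b ⟨hb, -, -⟩ hab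
    funext i
    refine (ZMod.intCast_eq_intCast_iff_of_abs_sub_lt ?_).mp (congrFun hab i)
    rcases ha i with h | h | h <;> rcases hb i with h' | h' | h' <;> norm_num [h, h']
  · rintro w ⟨hC, hw, hweight⟩
    have hlift : (fun i => ((w i).valMinAbs : ZMod 5)) = w :=
      funext fun i => ZMod.coe_valMinAbs (w i)
    have hc (i : ι) := ZMod.valMinAbs_ternary_of_mem (hw i)
    refine ⟨fun i => (w i).valMinAbs, ⟨hc, ?_, by rwa [hlift]⟩, hlift⟩
    rw [← hammingNorm_intCast_of_abs_lt (hsmall hc), hlift, hweight]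

lemma sum_intCast_div_sqrt_mul_self (c : ι → ℤ) {r : ℝ} (hr : 0 ≤ r) :
    ∑ i, (c i / √r) * (c i / √r) = ((∑ i, c i ^ 2 : ℤ) : ℝ) / r := by
  push_cast
  rw [sum_div]
  refine sum_congr rfl fun i _ => ?_
  rw [div_mul_div_comm, Real.mul_self_sqrt hr, sq]

end IntVector

theorem constructionA_kissing_number_general
    (C : Submodule (ZMod 5) (Fin 24 → ZMod 5))
    (hlow : ∀ c ∈ C, c ≠ 0 → 10 ≤ hammingNorm c)
    (L : Set (Fin 24 → ℝ))
    (hL : L = {x | ∃ c : Fin 24 → ℤ,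
        (fun i => (c i : ZMod 5)) ∈ C ∧ x = fun i => (c i : ℝ) / Real.sqrt 5}) :
    Set.BijOn (fun (c : Fin 24 → ℤ) => (fun i => (c i : ℝ) / Real.sqrt 5))
      {c : Fin 24 → ℤ | (∀ i, c i = -1 ∨ c i = 0 ∨ c i = 1) ∧
        (Finset.univ.filter (fun i => c i ≠ 0)).card = 10 ∧
        (fun i => (c i : ZMod 5)) ∈ C}
      {x | x ∈ L ∧ ∑ i, x i * x i = 2} ∧
    Set.ncard {x | x ∈ L ∧ ∑ i, x i * x i = 2} =
      Set.ncard {w : Fin 24 → ZMod 5 | w ∈ C ∧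
        (∀ i, w i = 0 ∨ w i = 1 ∨ w i = 4) ∧ hammingNorm w = 10} := by
  have hnorm (c : Fin 24 → ℤ) :
      ∑ i, (c i / √5) * (c i / √5) = 2 ↔ ∑ i, c i ^ 2 = ((10 : ℕ) : ℤ) := by
    rw [sum_intCast_div_sqrt_mul_self c (by norm_num), div_eq_iff (by norm_num)]
    norm_cast
  have hbij : Set.BijOn (fun (c : Fin 24 → ℤ) i => (c i : ℝ) / √5)
      {c | (∀ i, c i = -1 ∨ c i = 0 ∨ c i = 1) ∧ #{i | c i ≠ 0} = 10 ∧
        (fun i => (c i : ZMod 5)) ∈ C}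
      {x | x ∈ L ∧ ∑ i, x i * x i = 2} := by
    refine ⟨?_, (intCast_div_injective (by positivity)).injOn, ?_⟩
    · rintro c ⟨hc, hcard, hC⟩
      exact ⟨hL ▸ ⟨c, hC, rfl⟩,
        (hnorm c).mpr (hcard ▸ (sum_sq_eq_card_support_iff c).mpr hc)⟩
    · rintro x ⟨hxL, hx⟩
      obtain ⟨c, hC, rfl⟩ := hL ▸ hxL
      obtain ⟨hc, hcard⟩ := ternary_of_sum_sq_eq_of_le_hammingNorm (p := 5) (C := C) hlow
        (by norm_num) (by norm_num) hC ((hnorm c).mp hx)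
      exact ⟨c, ⟨hc, hcard, hC⟩, rfl⟩
  have hreduce := bijOn_intCast_zmod_five (C : Set (Fin 24 → ZMod 5)) 10
  exact ⟨hbij, hbij.ncard_eq.symm.trans hreduce.ncard_eq⟩

/-- If `C` is a self-dual `[24,12,10]` code over `𝔽₅`, then `c ↦ (1/√5)·c` is a
bijection from the set of `c ∈ ℤ²⁴` with entries in `{-1,0,1}`, exactly `10` nonzero
entries and `(c mod 5) ∈ C`, onto the set of norm-`2` vectors of `A₅(C)`.  In
particular the kissing number of `A₅(C)` equals the number of codewords of `C` with
all coordinates in `{0,1,4}` and Hamming weight `10`. -/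
theorem constructionA_kissing_number
    (C : Submodule (ZMod 5) (Fin 24 → ZMod 5))
    (hdim : Module.finrank (ZMod 5) C = 12)
    (hsd : ∀ x : Fin 24 → ZMod 5, x ∈ C ↔ ∀ c ∈ C, ∑ i, x i * c i = 0)
    (hlow : ∀ c ∈ C, c ≠ 0 → 10 ≤ hammingNorm c)
    (hex : ∃ c ∈ C, c ≠ 0 ∧ hammingNorm c = 10)
    (L : Set (Fin 24 → ℝ))
    (hL : L = {x | ∃ c : Fin 24 → ℤ,
        (fun i => (c i : ZMod 5)) ∈ C ∧ x = fun i => (c i : ℝ) / Real.sqrt 5}) :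
    Set.BijOn (fun (c : Fin 24 → ℤ) => (fun i => (c i : ℝ) / Real.sqrt 5))
      {c : Fin 24 → ℤ | (∀ i, c i = -1 ∨ c i = 0 ∨ c i = 1) ∧
        (Finset.univ.filter (fun i => c i ≠ 0)).card = 10 ∧
        (fun i => (c i : ZMod 5)) ∈ C}
      {x | x ∈ L ∧ ∑ i, x i * x i = 2} ∧
    Set.ncard {x | x ∈ L ∧ ∑ i, x i * x i = 2} =
      Set.ncard {w : Fin 24 → ZMod 5 | w ∈ C ∧
        (∀ i, w i = 0 ∨ w i = 1 ∨ w i = 4) ∧ hammingNorm w = 10} :=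
  constructionA_kissing_number_general C hlow L hL
end

section
/- Let C be a self-dual [24,12,10] code over F5, let L = A5(C) = { (1/√5)·c : c ∈ ℤ^24, (c mod 5) ∈ C } ⊆ ℝ^24, and suppose L = L1 + L2 where L1 and L2 are additive subgroups of ℝ^24 with ⟨a,b⟩ = 0 for all a ∈ L1 and b ∈ L2, L1 ∩ L2 = {0}, and every nonzero vector of L1 and of L2 has norm at least 2. Then for each i ∈ {1,…,24}, the vector √5·e_i (where e_i is the i-th standard unit vector of ℝ^24) belongs to L1 or to L2. -/
/-!
Write `√5·eᵢ = a + b` with `a ∈ L₁`, `b ∈ L₂`, and suppose both are nonzero.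
Orthogonality gives `⟨a,a⟩ + ⟨b,b⟩ = 5` and `⟨a,a⟩ = ⟨a,√5·eᵢ⟩`, so `⟨a,a⟩ ∈ [2,3]`.
Writing `a = c/√5` with `c` a lift of a codeword, this says `∑ cⱼ² = 5cᵢ` with `cᵢ ∈ {2,3}`.
But then `c mod 5` is a nonzero codeword, so `c` has at least `10` nonzero entries and
`∑ cⱼ² ≥ cᵢ² + 9 > 5cᵢ`.
-/

open Matrix

variable {ι : Type*}

lemma hammingNorm_add_sq_sub_one_le_sum_sq [Fintype ι] (c : ι → ℤ) {i : ι} (hi : c i ≠ 0) :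
    (hammingNorm c : ℤ) + (c i ^ 2 - 1) ≤ ∑ j, c j ^ 2 := by
  set indicator : ι → ℤ := fun j => if c j ≠ 0 then 1 else 0
  have hcount : (hammingNorm c : ℤ) = ∑ j, indicator j := by
    simp [indicator, hammingNorm, Finset.card_filter]
  have hexcess : ∀ j, 0 ≤ c j ^ 2 - indicator j := by
    intro j
    by_cases h : c j = 0
    · simp [indicator, h]
    · simpa [indicator, h] using Int.one_le_abs h
  have hsplit : ∑ j, c j ^ 2 = ∑ j, indicator j + ∑ j, (c j ^ 2 - indicator j) := by
    rw [← Finset.sum_add_distrib]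
    simp
  have hi_excess := Finset.single_le_sum (fun j _ => hexcess j) (Finset.mem_univ i)
  simp only [indicator, if_pos hi] at hi_excess
  linarith

lemma mul_lt_sum_sq_of_intCast_mem [Fintype ι] {m d : ℕ} (hmd : m ^ 2 + 4 < 4 * d)
    {C : Set (ι → ZMod m)} (hlow : ∀ x ∈ C, x ≠ 0 → d ≤ hammingNorm x) {c : ι → ℤ}
    (hc : (fun j => (c j : ZMod m)) ∈ C) {i : ι} (hi : ¬ (m : ℤ) ∣ c i) :
    m * c i < ∑ j, c j ^ 2 := by
  have hci : (c i : ZMod m) ≠ 0 := by rwa [Ne, ZMod.intCast_zmod_eq_zero_iff_dvd]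
  have hweight : d ≤ hammingNorm c :=
    (hlow _ hc fun h => hci (congrFun h i)).trans
      (hammingNorm_comp_le_hammingNorm (fun _ => Int.cast) fun _ => Int.cast_zero)
  have hci_ne : c i ≠ 0 := fun h => hi (h ▸ dvd_zero _)
  have := hammingNorm_add_sq_sub_one_le_sum_sq c hci_ne
  have hmd' : (m : ℤ) ^ 2 + 4 < 4 * d := by exact_mod_cast hmd
  have hweight' : (d : ℤ) ≤ hammingNorm c := by exact_mod_cast hweight
  nlinarith [sq_nonneg (2 * c i - m)]

lemma dotProduct_add_self_of_dotProduct_eq_zero [Fintype ι] {R : Type*} [CommSemiring R]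
    {a b : ι → R} (h : a ⬝ᵥ b = 0) : (a + b) ⬝ᵥ (a + b) = a ⬝ᵥ a + b ⬝ᵥ b := by
  rw [add_dotProduct, dotProduct_add, dotProduct_add, dotProduct_comm b a, h]
  simp

lemma intCast_div_dotProduct_self [Fintype ι] (c : ι → ℤ) (r : ℝ) :
    (fun j => (c j : ℝ) / r) ⬝ᵥ (fun j => (c j : ℝ) / r) =
      ((∑ j, c j ^ 2 : ℤ) : ℝ) / r ^ 2 := by
  simp only [dotProduct, Int.cast_sum, Int.cast_pow, Finset.sum_div]
  exact Finset.sum_congr rfl fun j _ => by ring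

lemma intCast_div_dotProduct_single [Fintype ι] [DecidableEq ι] (c : ι → ℤ) {r : ℝ}
    (hr : r ≠ 0) (i : ι) :
    (fun j => (c j : ℝ) / r) ⬝ᵥ Pi.single i r = c i := by
  rw [dotProduct_single, div_mul_cancel₀ _ hr]

lemma single_sqrt_five_mem_constructionA [DecidableEq ι] (C : Submodule (ZMod 5) (ι → ZMod 5))
    (i : ι) :
    Pi.single i (Real.sqrt 5) ∈ {x | ∃ c : ι → ℤ,
      (fun j => (c j : ZMod 5)) ∈ C ∧ x = fun j => (c j : ℝ) / Real.sqrt 5} := by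
  refine ⟨Pi.single i 5, ?_, ?_⟩
  · convert C.zero_mem using 1
    ext j
    rcases eq_or_ne j i with rfl | hji
    · simpa using ZMod.natCast_self 5
    · simp [hji]
  · ext j
    rcases eq_or_ne j i with rfl | hji
    · simp [Real.div_sqrt]
    · simp [hji]

lemma dotProduct_single_sqrt_five_ne_dotProduct_self [Fintype ι] [DecidableEq ι]
    {C : Set (ι → ZMod 5)} (hlow : ∀ x ∈ C, x ≠ 0 → 10 ≤ hammingNorm x) {c : ι → ℤ}
    (hc : (fun j => (c j : ZMod 5)) ∈ C) (i : ι)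
    (h2 : 2 ≤ (fun j => (c j : ℝ) / Real.sqrt 5) ⬝ᵥ (fun j => (c j : ℝ) / Real.sqrt 5))
    (h3 : (fun j => (c j : ℝ) / Real.sqrt 5) ⬝ᵥ (fun j => (c j : ℝ) / Real.sqrt 5) ≤ 3) :
    (fun j => (c j : ℝ) / Real.sqrt 5) ⬝ᵥ Pi.single i (Real.sqrt 5) ≠
      (fun j => (c j : ℝ) / Real.sqrt 5) ⬝ᵥ (fun j => (c j : ℝ) / Real.sqrt 5) := by
  intro hproj
  rw [intCast_div_dotProduct_single c (by positivity)] at hproj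
  rw [← hproj] at h2 h3
  have hci_lo : (2 : ℤ) ≤ c i := by exact_mod_cast h2
  have hci_hi : c i ≤ 3 := by exact_mod_cast h3
  have hsum_sq : ∑ j, c j ^ 2 = 5 * c i := by
    rw [intCast_div_dotProduct_self, Real.sq_sqrt (by norm_num)] at hproj
    have hcast : ((∑ j, c j ^ 2 : ℤ) : ℝ) = 5 * c i := by rw [hproj]; ring
    exact_mod_cast hcast
  exact (mul_lt_sum_sq_of_intCast_mem (by norm_num) hlow hc (by omega)).ne' hsum_sq

theorem sqrt_five_unit_vectors_in_summand_general
    (C : Submodule (ZMod 5) (Fin 24 → ZMod 5))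
    (hlow : ∀ c ∈ C, c ≠ 0 → 10 ≤ hammingNorm c)
    (L : Set (Fin 24 → ℝ))
    (hL : L = {x | ∃ c : Fin 24 → ℤ,
        (fun i => (c i : ZMod 5)) ∈ C ∧ x = fun i => (c i : ℝ) / Real.sqrt 5})
    (L1 L2 : AddSubgroup (Fin 24 → ℝ))
    (hsum : ∀ x : Fin 24 → ℝ, x ∈ L ↔ ∃ a ∈ L1, ∃ b ∈ L2, x = a + b)
    (horth : ∀ a ∈ L1, ∀ b ∈ L2, ∑ i, a i * b i = 0)
    (hmin1 : ∀ a ∈ L1, a ≠ 0 → 2 ≤ ∑ i, a i * a i)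
    (hmin2 : ∀ b ∈ L2, b ≠ 0 → 2 ≤ ∑ i, b i * b i) :
    ∀ i : Fin 24,
      (fun j => if j = i then Real.sqrt 5 else 0) ∈ L1 ∨
      (fun j => if j = i then Real.sqrt 5 else 0) ∈ L2 := by
  intro i
  rw [show (fun j => if j = i then Real.sqrt 5 else 0) = Pi.single i (Real.sqrt 5) from
    funext fun j => (Pi.single_apply i _ j).symm]
  obtain ⟨a, ha, b, hb, hab⟩ := (hsum _).1 (hL ▸ single_sqrt_five_mem_constructionA C i)
  rcases eq_or_ne a 0 with rfl | ha0
  · exact Or.inr (by simpa [hab] using hb)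
  rcases eq_or_ne b 0 with rfl | hb0
  · exact Or.inl (by simpa [hab] using ha)
  have hab_orth : a ⬝ᵥ b = 0 := horth a ha b hb
  have hnorm : a ⬝ᵥ a + b ⬝ᵥ b = 5 := by
    rw [← dotProduct_add_self_of_dotProduct_eq_zero hab_orth, ← hab, dotProduct_single]
    simp
  have hproj : a ⬝ᵥ Pi.single i (Real.sqrt 5) = a ⬝ᵥ a := by
    rw [hab, dotProduct_add, hab_orth, add_zero]
  have ha2 : 2 ≤ a ⬝ᵥ a := hmin1 a ha ha0
  have hb2 : 2 ≤ b ⬝ᵥ b := hmin2 b hb hb0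
  have haL : a ∈ L := (hsum a).2 ⟨a, ha, 0, L2.zero_mem, (add_zero a).symm⟩
  rw [hL] at haL
  obtain ⟨c, hcC, rfl⟩ := haL
  exact absurd hproj
    (dotProduct_single_sqrt_five_ne_dotProduct_self hlow hcC i ha2 (by linarith))

/-- Let `C` be a self-dual `[24,12,10]` code over `𝔽₅` and let `L = A₅(C)`.
Suppose `L = L₁ + L₂` with `L₁, L₂` orthogonal additive subgroups of `ℝ²⁴`
intersecting trivially, each of whose nonzero vectors has norm at least `2`.
Then each `√5·eᵢ` belongs to `L₁` or to `L₂`. -/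
theorem sqrt_five_unit_vectors_in_summand
    (C : Submodule (ZMod 5) (Fin 24 → ZMod 5))
    (hdim : Module.finrank (ZMod 5) C = 12)
    (hsd : ∀ x : Fin 24 → ZMod 5, x ∈ C ↔ ∀ c ∈ C, ∑ i, x i * c i = 0)
    (hlow : ∀ c ∈ C, c ≠ 0 → 10 ≤ hammingNorm c)
    (hex : ∃ c ∈ C, c ≠ 0 ∧ hammingNorm c = 10)
    (L : Set (Fin 24 → ℝ))
    (hL : L = {x | ∃ c : Fin 24 → ℤ,
        (fun i => (c i : ZMod 5)) ∈ C ∧ x = fun i => (c i : ℝ) / Real.sqrt 5})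
    (L1 L2 : AddSubgroup (Fin 24 → ℝ))
    (hsum : ∀ x : Fin 24 → ℝ, x ∈ L ↔ ∃ a ∈ L1, ∃ b ∈ L2, x = a + b)
    (horth : ∀ a ∈ L1, ∀ b ∈ L2, ∑ i, a i * b i = 0)
    (hint : ∀ x : Fin 24 → ℝ, x ∈ L1 → x ∈ L2 → x = 0)
    (hmin1 : ∀ a ∈ L1, a ≠ 0 → 2 ≤ ∑ i, a i * a i)
    (hmin2 : ∀ b ∈ L2, b ≠ 0 → 2 ≤ ∑ i, b i * b i) :
    ∀ i : Fin 24,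
      (fun j => if j = i then Real.sqrt 5 else 0) ∈ L1 ∨
      (fun j => if j = i then Real.sqrt 5 else 0) ∈ L2 :=
  sqrt_five_unit_vectors_in_summand_general C hlow L hL L1 L2 hsum horth hmin1 hmin2
end

section
/- Let C be a self-dual [24,12,10] code over F5, let L = A5(C) = { (1/√5)·c : c ∈ ℤ^24, (c mod 5) ∈ C } ⊆ ℝ^24, and suppose L = L1 + L2 where L1 and L2 are additive subgroups of ℝ^24 with ⟨a,b⟩ = 0 for all a ∈ L1 and b ∈ L2, L1 ∩ L2 = {0}, √5·e_i ∈ L1 for i = 1,…,12, and √5·e_i ∈ L2 for i = 13,…,24. Then C is decomposable as a direct sum of two codes of length 12: for every c ∈ ℤ^24, (c mod 5) ∈ C if and only if ((c_1,…,c_12,0,…,0) mod 5) ∈ C and ((0,…,0,c_13,…,c_24) mod 5) ∈ C. Moreover, the length-12 codes C1 = { (c_1,…,c_12) mod 5 : (1/√5)(c_1,…,c_12,0,…,0) ∈ L1 } and C2 = { (c_13,…,c_24) mod 5 : (1/√5)(0,…,0,c_13,…,c_24) ∈ L2 } are both self-dual. -/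
/-!
Orthogonality to the vectors `√5 eᵢ` forces `L₁` to vanish on the last twelve coordinates and
`L₂` on the first twelve, so the splitting `x = a + b` of a lattice vector is its splitting into
the two halves of coordinates. Hence `L₁` is the set of lattice vectors supported on the first
half, `L₂` those supported on the second, and reducing mod 5 shows that `C` is closed under both
coordinate projections: `C = C₁ ⊕ C₂` with `C₁ = {u | (u, 0) ∈ C}` and `C₂ = {v | (0, v) ∈ C}`.
The dual of a direct sum is the direct sum of the duals, so self-duality passes from `C` to
`C₁` and `C₂`.
-/

open Finset

/-- For `s = √p` this is the lattice `A_p(C)` of Construction A. -/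
def constructionA {ι : Type*} {k : ℕ} (C : Set (ι → ZMod k)) (s : ℝ) : Set (ι → ℝ) :=
  {x | ∃ c : ι → ℤ, (fun i => (c i : ZMod k)) ∈ C ∧ x = fun i => (c i : ℝ) / s}

def dualCode {ι R : Type*} [Fintype ι] [Mul R] [AddCommMonoid R] (C : Set (ι → R)) :
    Set (ι → R) :=
  {x | ∀ c ∈ C, ∑ i, x i * c i = 0}

theorem zero_mem_dualCode {ι R : Type*} [Fintype ι] [NonUnitalNonAssocSemiring R]
    (S : Set (ι → R)) : 0 ∈ dualCode S := by
  simp [dualCode]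

namespace Fin

variable {m n : ℕ} {α : Type*}

theorem append_zero_zero [Zero α] : append (0 : Fin m → α) (0 : Fin n → α) = 0 := by
  funext j
  refine addCases (fun i => ?_) (fun i => ?_) j <;> simp

theorem append_zero_eq_dite [Zero α] (u : Fin m → α) :
    append u (0 : Fin n → α) = fun j => if h : j.val < m then u ⟨j.val, h⟩ else 0 := by
  funext j
  refine addCases (fun i => ?_) (fun i => ?_) j <;> simp

theorem zero_append_eq_ite [NeZero n] [Zero α] (v : Fin n → α) :
    append (0 : Fin m → α) v = fun j => if j.val < m then 0 else
      v ⟨j.val - m, by have := j.isLt; have := NeZero.pos n; omega⟩ := by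
  funext j
  refine addCases (fun i => ?_) (fun i => ?_) j <;> simp

theorem sum_append_mul_append [NonUnitalNonAssocSemiring α] (u u' : Fin m → α)
    (v v' : Fin n → α) :
    ∑ i, append u v i * append u' v' i = ∑ i, u i * u' i + ∑ i, v i * v' i := by
  simp [sum_univ_add]

end Fin

section DirectSum

variable {m n : ℕ} {R : Type*} [NonUnitalNonAssocSemiring R]

theorem append_mem_dualCode_iff {A : Set (Fin m → R)} {B : Set (Fin n → R)}
    {C : Set (Fin (m + n) → R)} (hC : ∀ u v, Fin.append u v ∈ C ↔ u ∈ A ∧ v ∈ B)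
    (hA : 0 ∈ A) (hB : 0 ∈ B) (u : Fin m → R) (v : Fin n → R) :
    Fin.append u v ∈ dualCode C ↔ u ∈ dualCode A ∧ v ∈ dualCode B := by
  constructor
  · intro h
    refine ⟨fun u' hu' => ?_, fun v' hv' => ?_⟩
    · simpa [Fin.sum_append_mul_append] using h _ ((hC u' 0).2 ⟨hu', hB⟩)
    · simpa [Fin.sum_append_mul_append] using h _ ((hC 0 v').2 ⟨hA, hv'⟩)
  · rintro ⟨hu, hv⟩ c hc
    rw [← Fin.append_castAdd_natAdd (f := c)] at hc ⊢
    obtain ⟨hcA, hcB⟩ := (hC _ _).1 hc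
    rw [Fin.sum_append_mul_append, hu _ hcA, hv _ hcB, add_zero]

theorem eq_dualCode_of_append {A : Set (Fin m → R)} {B : Set (Fin n → R)}
    {C : Set (Fin (m + n) → R)} (hC : ∀ u v, Fin.append u v ∈ C ↔ u ∈ A ∧ v ∈ B)
    (h0 : 0 ∈ C) (hsd : C = dualCode C) : A = dualCode A ∧ B = dualCode B := by
  have hzero : (0 : Fin m → R) ∈ A ∧ (0 : Fin n → R) ∈ B :=
    (hC 0 0).1 (by rwa [Fin.append_zero_zero])
  have hdual u v : u ∈ A ∧ v ∈ B ↔ u ∈ dualCode A ∧ v ∈ dualCode B := by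
    rw [← hC, ← append_mem_dualCode_iff hC hzero.1 hzero.2, ← hsd]
  exact ⟨Set.ext fun u => by simpa [hzero.2, zero_mem_dualCode] using hdual u 0,
    Set.ext fun v => by simpa [hzero.1, zero_mem_dualCode] using hdual 0 v⟩

end DirectSum

section Splitting

variable {ι : Type*}

theorem apply_eq_zero_of_sum_mul_ite_eq_zero [Fintype ι] [DecidableEq ι] {R : Type*}
    [NonUnitalNonAssocSemiring R] [NoZeroDivisors R] {a : ι → R} {i : ι} {s : R} (hs : s ≠ 0)
    (h : ∑ j, a j * (if j = i then s else 0) = 0) : a i = 0 := by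
  simpa [hs] using h

variable (p : ι → Prop) [DecidablePred p]

theorem ite_mem_and_ite_mem {G : Type*} [AddGroup G] {L : Set (ι → G)}
    {L1 L2 : AddSubgroup (ι → G)} (hsum : ∀ x, x ∈ L ↔ ∃ a ∈ L1, ∃ b ∈ L2, x = a + b)
    (hL1_zero : ∀ a ∈ L1, ∀ j, ¬ p j → a j = 0)
    (hL2_zero : ∀ b ∈ L2, ∀ j, p j → b j = 0)
    {x : ι → G} (hx : x ∈ L) :
    (fun j => if p j then x j else 0) ∈ L1 ∧ (fun j => if p j then 0 else x j) ∈ L2 := by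
  obtain ⟨a, ha, b, hb, rfl⟩ := (hsum x).1 hx
  constructor
  · convert ha using 1
    funext j
    by_cases hj : p j <;> simp [hj, hL1_zero a ha, hL2_zero b hb]
  · convert hb using 1
    funext j
    by_cases hj : p j <;> simp [hj, hL1_zero a ha, hL2_zero b hb]

theorem mem_iff_ite_mem_and_ite_mem {M : Type*} [AddZeroClass M] {C : AddSubmonoid (ι → M)}
    (h₁ : ∀ x ∈ C, (fun j => if p j then x j else 0) ∈ C)
    (h₂ : ∀ x ∈ C, (fun j => if p j then 0 else x j) ∈ C) (x : ι → M) :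
    x ∈ C ↔ (fun j => if p j then x j else 0) ∈ C ∧ (fun j => if p j then 0 else x j) ∈ C := by
  refine ⟨fun hx => ⟨h₁ x hx, h₂ x hx⟩, fun ⟨hl, hr⟩ => ?_⟩
  convert C.add_mem hl hr using 1
  funext j
  by_cases hj : p j <;> simp [hj]

variable {k : ℕ} {C : Set (ι → ZMod k)} {s : ℝ}

theorem exists_intCast_eq (x : ι → ZMod k) : ∃ c : ι → ℤ, (fun i => (c i : ZMod k)) = x :=
  ZMod.intCast_surjective.comp_left x

theorem intCast_div_mem_constructionA_iff (hs : s ≠ 0) (c : ι → ℤ) :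
    (fun i => (c i : ℝ) / s) ∈ constructionA C s ↔ (fun i => (c i : ZMod k)) ∈ C := by
  refine ⟨fun ⟨c', hc', heq⟩ => ?_, fun hc => ⟨c, hc, rfl⟩⟩
  have : c' = c := funext fun i => by
    exact_mod_cast ((div_left_inj' hs).1 (congrFun heq i)).symm
  rwa [this] at hc'

variable {M : Set (ι → ℝ)}

theorem ite_mem_of_constructionA (hs : s ≠ 0) (hM : M ⊆ constructionA C s)
    (hproj : ∀ x ∈ constructionA C s, (fun j => if p j then x j else 0) ∈ M)
    {x : ι → ZMod k} (hx : x ∈ C) :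
    (fun j => if p j then x j else 0) ∈ C := by
  obtain ⟨c, rfl⟩ := exists_intCast_eq x
  have := hM (hproj _ ((intCast_div_mem_constructionA_iff hs c).2 hx))
  convert (intCast_div_mem_constructionA_iff hs fun j => if p j then c j else 0).1 ?_ using 2
  · split_ifs <;> simp
  · convert this using 2
    split_ifs <;> simp

theorem intCast_div_mem_iff_of_vanishing (hs : s ≠ 0) (hM : M ⊆ constructionA C s)
    (hproj : ∀ x ∈ constructionA C s, (fun j => if p j then x j else 0) ∈ M)
    {c : ι → ℤ} (hc : ∀ j, ¬ p j → c j = 0) :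
    (fun j => (c j : ℝ) / s) ∈ M ↔ (fun j => (c j : ZMod k)) ∈ C := by
  rw [← intCast_div_mem_constructionA_iff hs]
  refine ⟨fun h => hM h, fun h => ?_⟩
  convert hproj _ h using 2 with j
  by_cases hj : p j <;> simp [hj, hc]

end Splitting

section Halves

variable {m n k : ℕ} {C : Set (Fin (m + n) → ZMod k)} {s : ℝ} {M : Set (Fin (m + n) → ℝ)}

theorem setOf_exists_dite_mem_eq (hs : s ≠ 0) (hM : M ⊆ constructionA C s)
    (hproj : ∀ x ∈ constructionA C s, (fun j => if j.val < m then x j else 0) ∈ M) :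
    {w | ∃ c : Fin m → ℤ, w = (fun i => (c i : ZMod k)) ∧
      (fun j : Fin (m + n) => if h : j.val < m then (c ⟨j.val, h⟩ : ℝ) / s else 0) ∈ M} =
    {u | Fin.append u 0 ∈ C} := by
  have key (c : Fin m → ℤ) :
      (fun j : Fin (m + n) => if h : j.val < m then (c ⟨j.val, h⟩ : ℝ) / s else 0) ∈ M ↔
        Fin.append (fun i => (c i : ZMod k)) 0 ∈ C := by
    have hc : ∀ j : Fin (m + n), ¬ j.val < m → Fin.append c 0 j = 0 := by
      intro j hj
      simp [Fin.append_zero_eq_dite, hj]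
    convert intCast_div_mem_iff_of_vanishing _ hs hM hproj hc using 2
    · funext j
      split_ifs <;> simp [Fin.append_zero_eq_dite, *]
    · simp [Fin.append_zero_eq_dite, apply_dite]
  ext w
  refine ⟨fun ⟨c, hw, hc⟩ => hw ▸ (key c).1 hc, fun hw => ?_⟩
  obtain ⟨c, rfl⟩ := exists_intCast_eq w
  exact ⟨c, rfl, (key c).2 hw⟩

theorem setOf_exists_ite_mem_eq [NeZero n] (hs : s ≠ 0) (hM : M ⊆ constructionA C s)
    (hproj : ∀ x ∈ constructionA C s, (fun j => if ¬ j.val < m then x j else 0) ∈ M) :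
    {w | ∃ c : Fin n → ℤ, w = (fun i => (c i : ZMod k)) ∧
      (fun j : Fin (m + n) => if j.val < m then 0 else
        (c ⟨j.val - m, by have := j.isLt; have := NeZero.pos n; omega⟩ : ℝ) / s) ∈ M} =
    {v | Fin.append 0 v ∈ C} := by
  have key (c : Fin n → ℤ) :
      (fun j : Fin (m + n) => if j.val < m then 0 else
        (c ⟨j.val - m, by have := j.isLt; have := NeZero.pos n; omega⟩ : ℝ) / s) ∈ M ↔
        Fin.append 0 (fun i => (c i : ZMod k)) ∈ C := by
    have hc : ∀ j : Fin (m + n), ¬ ¬ j.val < m → Fin.append 0 c j = 0 := by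
      intro j hj
      simp [Fin.zero_append_eq_ite, not_not.1 hj]
    convert intCast_div_mem_iff_of_vanishing _ hs hM hproj hc using 2
    · funext j
      split_ifs <;> simp [Fin.zero_append_eq_ite, *]
    · simp [Fin.zero_append_eq_ite, apply_ite]
  ext w
  refine ⟨fun ⟨c, hw, hc⟩ => hw ▸ (key c).1 hc, fun hw => ?_⟩
  obtain ⟨c, rfl⟩ := exists_intCast_eq w
  exact ⟨c, rfl, (key c).2 hw⟩

theorem append_mem_iff_of_mem_iff {α : Type*} [Zero α] {C : Set (Fin (m + n) → α)}
    (h : ∀ x, x ∈ C ↔ (fun j => if j.val < m then x j else 0) ∈ C ∧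
      (fun j => if j.val < m then 0 else x j) ∈ C) (u : Fin m → α) (v : Fin n → α) :
    Fin.append u v ∈ C ↔ Fin.append u 0 ∈ C ∧ Fin.append 0 v ∈ C := by
  convert h (Fin.append u v) using 3 <;>
    funext j <;> refine Fin.addCases (fun i => ?_) (fun i => ?_) j <;> simp

end Halves

/-- Let `C` be a self-dual `[24,12,10]` code over `𝔽₅`, `L = A₅(C)`, and suppose
`L = L₁ + L₂` with `L₁, L₂` orthogonal additive subgroups of `ℝ²⁴` intersecting
trivially, `√5·eᵢ ∈ L₁` for `i = 1,…,12` and `√5·eᵢ ∈ L₂` for `i = 13,…,24`.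
Then `C` decomposes as the direct sum of two length-12 codes, and the length-12
codes `C₁`, `C₂` obtained from `L₁`, `L₂` are both self-dual. -/
theorem code_decomposes_into_self_dual_length_12_codes
    (C : Submodule (ZMod 5) (Fin 24 → ZMod 5))
    (hsd : ∀ x : Fin 24 → ZMod 5, x ∈ C ↔ ∀ c ∈ C, ∑ i, x i * c i = 0)
    (L : Set (Fin 24 → ℝ))
    (hL : L = {x | ∃ c : Fin 24 → ℤ,
        (fun i => (c i : ZMod 5)) ∈ C ∧ x = fun i => (c i : ℝ) / Real.sqrt 5})
    (L1 L2 : AddSubgroup (Fin 24 → ℝ))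
    (hsum : ∀ x : Fin 24 → ℝ, x ∈ L ↔ ∃ a ∈ L1, ∃ b ∈ L2, x = a + b)
    (horth : ∀ a ∈ L1, ∀ b ∈ L2, ∑ i, a i * b i = 0)
    (he1 : ∀ i : Fin 24, i.val < 12 →
      (fun j => if j = i then Real.sqrt 5 else 0) ∈ L1)
    (he2 : ∀ i : Fin 24, 12 ≤ i.val →
      (fun j => if j = i then Real.sqrt 5 else 0) ∈ L2)
    (C1 : Set (Fin 12 → ZMod 5))
    (hC1 : C1 = {w | ∃ c : Fin 12 → ℤ, w = (fun i => (c i : ZMod 5)) ∧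
      (fun j : Fin 24 => if h : j.val < 12
        then (c ⟨j.val, h⟩ : ℝ) / Real.sqrt 5 else 0) ∈ L1})
    (C2 : Set (Fin 12 → ZMod 5))
    (hC2 : C2 = {w | ∃ c : Fin 12 → ℤ, w = (fun i => (c i : ZMod 5)) ∧
      (fun j : Fin 24 => if j.val < 12 then 0
        else (c ⟨j.val - 12, by have := j.isLt; omega⟩ : ℝ) / Real.sqrt 5) ∈ L2}) :
    -- `C` is decomposable into the direct sum of two codes of length 12:
    (∀ c : Fin 24 → ℤ,
      (fun i => (c i : ZMod 5)) ∈ C ↔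
        ((fun i : Fin 24 => if i.val < 12 then (c i : ZMod 5) else 0) ∈ C ∧
         (fun i : Fin 24 => if i.val < 12 then 0 else (c i : ZMod 5)) ∈ C)) ∧
    -- `C₁` is self-dual:
    C1 = {x | ∀ w ∈ C1, ∑ i, x i * w i = 0} ∧
    -- `C₂` is self-dual:
    C2 = {x | ∀ w ∈ C2, ∑ i, x i * w i = 0} := by
  have hs : Real.sqrt 5 ≠ 0 := by positivity
  obtain rfl : L = constructionA (C : Set (Fin 24 → ZMod 5)) (Real.sqrt 5) := hL
  set A := constructionA (C : Set (Fin 24 → ZMod 5)) (Real.sqrt 5)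
  have hL1_zero (a) (ha : a ∈ L1) (j : Fin 24) (hj : ¬ j.val < 12) : a j = 0 :=
    apply_eq_zero_of_sum_mul_ite_eq_zero hs (horth a ha _ (he2 j (not_lt.1 hj)))
  have hL2_zero (b) (hb : b ∈ L2) (j : Fin 24) (hj : j.val < 12) : b j = 0 :=
    apply_eq_zero_of_sum_mul_ite_eq_zero hs <| by
      simpa only [mul_comm] using horth _ (he1 j hj) b hb
  have hsub1 : (L1 : Set _) ⊆ _ := fun a ha => (hsum a).2 ⟨a, ha, 0, L2.zero_mem, by simp⟩
  have hsub2 : (L2 : Set _) ⊆ _ := fun b hb => (hsum b).2 ⟨0, L1.zero_mem, b, hb, by simp⟩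
  have hsplit x (hx : x ∈ A) :=
    ite_mem_and_ite_mem (fun j : Fin 24 => j.val < 12) hsum hL1_zero hL2_zero hx
  have hproj1 x hx := (hsplit x hx).1
  have hproj2 x (hx : x ∈ A) : (fun j => if ¬ j.val < 12 then x j else 0) ∈ L2 := by
    simpa only [ite_not] using (hsplit x hx).2
  have hdecomp := mem_iff_ite_mem_and_ite_mem (C := C.toAddSubmonoid)
    (fun j : Fin 24 => j.val < 12) (fun x => ite_mem_of_constructionA _ hs hsub1 hproj1)
    (fun x hx => by
      simpa only [ite_not, SetLike.mem_coe, Submodule.mem_toAddSubmonoid] using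
        ite_mem_of_constructionA _ hs hsub2 hproj2 hx)
  have hC1' := hC1.trans (setOf_exists_dite_mem_eq (m := 12) (n := 12) hs hsub1 hproj1)
  have hC2' := hC2.trans (setOf_exists_ite_mem_eq (m := 12) (n := 12) hs hsub2 hproj2)
  refine ⟨fun c => hdecomp _, eq_dualCode_of_append (fun u v => ?_) C.zero_mem (Set.ext hsd)⟩
  rw [hC1', hC2']
  exact append_mem_iff_of_mem_iff hdecomp u v
end

section
/- There exists no self-dual code of length 12 over F5 whose minimum Hamming weight is at least 10. That is, every self-dual code C ⊆ (F5)^12 contains a nonzero codeword of Hamming weight at most 9. -/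
/-!
Self-duality forces `dim C = 6`, since the dual of a `k`-dimensional code of length `n` has
dimension `n - k`. A `k`-dimensional code has a nonzero word vanishing on any prescribed `k - 1`
coordinates (restricting to them has a kernel), which is the Singleton bound: some nonzero
codeword has weight at most `n - k + 1 = 7`.
-/

open Module Finset

section

variable {K ι : Type*} [Field K] [Fintype ι]

theorem Submodule.exists_mem_ne_zero_forall_eq_zero_of_card_lt (C : Submodule K (ι → K))
    (S : Finset ι) (hS : #S < finrank K C) : ∃ c ∈ C, c ≠ 0 ∧ ∀ i ∈ S, c i = 0 := by
  let restrict : C →ₗ[K] (S → K) := LinearMap.funLeft K K ((↑) : S → ι) ∘ₗ C.subtype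
  have hker : LinearMap.ker restrict ≠ ⊥ :=
    LinearMap.ker_ne_bot_of_finrank_lt (by simpa [finrank_fintype_fun_eq_card] using hS)
  obtain ⟨c, hc, hc0⟩ := Submodule.exists_mem_ne_zero_of_ne_bot hker
  refine ⟨c, c.2, fun h => hc0 (Subtype.ext h), fun i hi => ?_⟩
  exact congrFun (LinearMap.mem_ker.mp hc) ⟨i, hi⟩

variable [DecidableEq ι]

theorem Submodule.exists_mem_ne_zero_hammingNorm_add_finrank_le [DecidableEq K]
    (C : Submodule K (ι → K)) (hC : 0 < finrank K C) :
    ∃ c ∈ C, c ≠ 0 ∧ hammingNorm c + finrank K C ≤ Fintype.card ι + 1 := by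
  have hC_le : finrank K C ≤ Fintype.card ι :=
    C.finrank_le.trans_eq (finrank_fintype_fun_eq_card K)
  obtain ⟨S, -, hS⟩ := exists_subset_card_eq (s := (univ : Finset ι)) (n := finrank K C - 1)
    (by rw [card_univ]; omega)
  obtain ⟨c, hcC, hc0, hcS⟩ := C.exists_mem_ne_zero_forall_eq_zero_of_card_lt S (by omega)
  refine ⟨c, hcC, hc0, ?_⟩
  have hsupp : ({i | c i ≠ 0} : Finset ι) ⊆ Sᶜ := fun i hi =>
    mem_compl.mpr fun hiS => (mem_filter.mp hi).2 (hcS i hiS)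
  have hsupp_card := card_le_card hsupp
  rw [card_compl] at hsupp_card
  unfold hammingNorm
  omega

def dotOrthogonal (C : Submodule K (ι → K)) : Submodule K (ι → K) :=
  C.dualAnnihilator.comap (dotProductEquiv K ι).toLinearMap

theorem mem_dotOrthogonal {C : Submodule K (ι → K)} {x : ι → K} :
    x ∈ dotOrthogonal C ↔ ∀ c ∈ C, x ⬝ᵥ c = 0 :=
  Submodule.mem_dualAnnihilator _

theorem finrank_add_finrank_dotOrthogonal (C : Submodule K (ι → K)) :
    finrank K C + finrank K (dotOrthogonal C) = Fintype.card ι := by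
  rw [dotOrthogonal, Submodule.comap_equiv_eq_map_symm, LinearEquiv.finrank_map_eq,
    Subspace.finrank_add_finrank_dualAnnihilator_eq, finrank_fintype_fun_eq_card]

theorem two_mul_finrank_of_dotOrthogonal_eq {C : Submodule K (ι → K)}
    (hC : dotOrthogonal C = C) : 2 * finrank K C = Fintype.card ι := by
  have hsum := finrank_add_finrank_dotOrthogonal C
  rw [hC] at hsum
  omega

end

/-- There exists no self-dual code of length 12 over `𝔽₅` with minimum Hamming
weight at least 10: every self-dual `C ⊆ (𝔽₅)¹²` contains a nonzero codeword of
Hamming weight at most 9. -/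
theorem self_dual_length_12_F5_min_weight_le_nine
    (C : Submodule (ZMod 5) (Fin 12 → ZMod 5))
    (hsd : ∀ x : Fin 12 → ZMod 5, x ∈ C ↔ ∀ c ∈ C, ∑ i, x i * c i = 0) :
    ∃ c ∈ C, c ≠ 0 ∧ hammingNorm c ≤ 9 := by
  have : Fact (Nat.Prime 5) := ⟨by norm_num⟩
  have hself : dotOrthogonal C = C := by
    ext x; rw [mem_dotOrthogonal, hsd]; rfl
  have hdim : finrank (ZMod 5) C = 6 := by
    have htwice := two_mul_finrank_of_dotOrthogonal_eq hself
    rw [Fintype.card_fin] at htwice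
    omega
  obtain ⟨c, hcC, hc0, hc⟩ := C.exists_mem_ne_zero_hammingNorm_add_finrank_le (by omega)
  refine ⟨c, hcC, hc0, ?_⟩
  simp only [hdim, Fintype.card_fin] at hc
  omega
end
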